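/- Let f be a holomorphic generator on 𝔻 with Denjoy–Wolff point a = 0, i.e. f(z) = z·p(z) with p holomorphic and Re p ≥ 0 on 𝔻, and let ζ_1, …, ζ_N be pairwise distinct boundary regular null points of f with f'(ζ_n) = ∠lim_{z→ζ_n} f(z)/(z − ζ_n) < 0 real. Then for any points η_1, …, η_N ∈ ∂𝔻 with η_n ≠ ζ_n for all n, there exist a real number r ≥ 0 and a holomorphic generator h on 𝔻 with Denjoy–Wolff point 0 (i.e. h(z) = z·q(z), q holomorphic, Re q ≥ 0 on 𝔻) satisfying ∠lim_{z→ζ_n} |h(z)/(z − ζ_n)| = ∞ for every n, such that 1/f(z) = Σ_{n=1}^{N} (1/|f'(ζ_n)|)·( (conj(ζ_n)·η_n/(conj(ζ_n)·η_n − 1))·(1/z) − 1/(z − ζ_n) ) + r/h(z) for all z ∈ 𝔻 with f(z) ≠ 0 and h(z) ≠ 0. -/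

import Mathlib

/-!
Let `P = 1 / p`. If `p` vanishes somewhere in the disk, it vanishes identically by the open
mapping theorem, so with `0⁻¹ = 0` the function `P` is always holomorphic with `Re P ≥ 0`. The
hypothesis on `f'(ζₙ) = mₙ` says that `(z - ζₙ) P z → -σₙ ζₙ` nontangentially, `σₙ = 1 / |mₙ|`.

Julia's lemma (Schwarz–Pick at `w = ρ ζ`, `ρ → 1`) gives `Re P ≥ (σₙ / 2) · Poisson(·, ζₙ)`.
Subtracting the Herglotz kernels `(σₖ / 2) (ζₖ + z) / (ζₖ - z)` one at a time leaves the other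
residues unchanged, so `Re P ≥ ∑ₙ (σₙ / 2) · Poisson(·, ζₙ)`.

Since `cₙ = ζ̄ₙ ηₙ / (ζ̄ₙ ηₙ - 1)` has real part `1 / 2`, the function `σₙ (cₙ - z / (z - ζₙ))`,
which is `z` times the n-th principal part of the statement, has real part
`(σₙ / 2) · Poisson(z, ζₙ)`. Hence `R = P - ∑ₙ σₙ (cₙ - z / (z - ζₙ))` has `Re R ≥ 0` and
`(z - ζₙ) R z → 0` nontangentially. Either `R ≡ 0`, and `r = 0`, `h z = z` work, or `R` has no
zeros, and `r = 1`, `h z = z / R z` work.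
-/

open Complex Filter Metric Finset

noncomputable section

/-- The Stolz angle at a boundary point `ζ` with opening parameter `M`. -/
def StolzAngle (ζ : ℂ) (M : ℝ) : Set ℂ :=
  {z : ℂ | ‖z‖ < 1 ∧ ‖ζ - z‖ < M * (1 - ‖z‖)}

/-- Angular (nontangential) limit of `h` at `ζ` equals `L`: within every Stolz
angle `S(ζ, M)`, `M > 1`, the function tends to `L`. -/
def AngularLimit (h : ℂ → ℂ) (ζ : ℂ) (L : ℂ) : Prop :=
  ∀ M : ℝ, 1 < M → Tendsto h (nhdsWithin ζ (StolzAngle ζ M)) (nhds L)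

/-- Angular limit of `h` at `ζ` is `∞`: `|h|` tends to `+∞` within every Stolz angle. -/
def AngularLimitInfty (h : ℂ → ℂ) (ζ : ℂ) : Prop :=
  ∀ M : ℝ, 1 < M → Tendsto (fun z => ‖h z‖) (nhdsWithin ζ (StolzAngle ζ M)) atTop

open Set Topology
open scoped ComplexConjugate

lemma norm_lt_norm_of_normSq_lt {x y : ℂ} (h : normSq x < normSq y) : ‖x‖ < ‖y‖ := by
  rw [normSq_eq_norm_sq, normSq_eq_norm_sq] at h
  exact lt_of_pow_lt_pow_left₀ 2 (norm_nonneg y) h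

lemma normSq_lt_one_of_mem_ball {z : ℂ} (hz : z ∈ ball (0 : ℂ) 1) : normSq z < 1 := by
  rw [normSq_eq_norm_sq]
  exact pow_lt_one₀ (norm_nonneg z) (mem_ball_zero_iff.1 hz) two_ne_zero

lemma ne_of_mem_ball_of_norm_eq_one {z ζ : ℂ} (hz : z ∈ ball (0 : ℂ) 1) (hζ : ‖ζ‖ = 1) :
    z ≠ ζ := by
  rintro rfl
  exact (mem_ball_zero_iff.1 hz).ne hζ

lemma normSq_add_eq_normSq_one_add_conj_mul_sub (u w : ℂ) :
    normSq (u + w) = normSq (1 + conj w * u) - (1 - normSq u) * (1 - normSq w) := by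
  simp only [normSq_apply, add_re, add_im, mul_re, mul_im, conj_re, conj_im, one_re, one_im]
  ring

lemma normSq_sub_eq_normSq_add_conj_sub (x a : ℂ) :
    normSq (x - a) = normSq (x + conj a) - 4 * x.re * a.re := by
  simp only [normSq_apply, add_re, add_im, sub_re, sub_im, conj_re, conj_im]
  ring

lemma normSq_one_sub_conj_mul {ζ : ℂ} (hζ : ‖ζ‖ = 1) (z : ℂ) :
    normSq (1 - conj ζ * z) = normSq (ζ - z) := by
  have : 1 - conj ζ * z = conj ζ * (ζ - z) := by
    rw [mul_sub, ← normSq_eq_conj_mul_self, normSq_eq_norm_sq, hζ, one_pow, ofReal_one]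
  rw [this, normSq_mul, normSq_conj, normSq_eq_norm_sq ζ, hζ, one_pow, one_mul]

lemma one_add_conj_mul_ne_zero {u w : ℂ} (hu : u ∈ ball (0 : ℂ) 1) (hw : w ∈ ball (0 : ℂ) 1) :
    1 + conj w * u ≠ 0 := by
  intro h
  have hlt : ‖conj w * u‖ < 1 := by
    rw [norm_mul, norm_conj]
    exact mul_lt_one_of_nonneg_of_lt_one_left (norm_nonneg w) (mem_ball_zero_iff.1 hw)
      (mem_ball_zero_iff.1 hu).le
  rw [eq_neg_of_add_eq_zero_right h, norm_neg, norm_one] at hlt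
  exact lt_irrefl 1 hlt

lemma mobius_mem_ball {u w : ℂ} (hu : u ∈ ball (0 : ℂ) 1) (hw : w ∈ ball (0 : ℂ) 1) :
    (u + w) / (1 + conj w * u) ∈ ball (0 : ℂ) 1 := by
  rw [mem_ball_zero_iff, norm_div, div_lt_one (norm_pos_iff.2 (one_add_conj_mul_ne_zero hu hw))]
  apply norm_lt_norm_of_normSq_lt
  rw [normSq_add_eq_normSq_one_add_conj_mul_sub u w, sub_lt_self_iff]
  nlinarith [normSq_lt_one_of_mem_ball hu, normSq_lt_one_of_mem_ball hw]

theorem schwarzPick_of_mapsTo_ball {g : ℂ → ℂ}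
    (hg : DifferentiableOn ℂ g (ball 0 1)) (hmaps : MapsTo g (ball 0 1) (ball 0 1))
    {z w : ℂ} (hz : z ∈ ball (0 : ℂ) 1) (hw : w ∈ ball (0 : ℂ) 1) (hgw : g w = 0) :
    ‖g z‖ * ‖1 - conj w * z‖ ≤ ‖z - w‖ := by
  set φ : ℂ → ℂ := fun u => (u + w) / (1 + conj w * u)
  have hφ : MapsTo φ (ball 0 1) (ball 0 1) := fun u hu => mobius_mem_ball hu hw
  have hφd : DifferentiableOn ℂ φ (ball 0 1) := fun u hu =>
    ((differentiableAt_id.add_const w).div ((differentiableAt_id.const_mul (conj w)).const_add 1)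
      (one_add_conj_mul_ne_zero hu hw)).differentiableWithinAt
  have hw' : -w ∈ ball (0 : ℂ) 1 := by rwa [mem_ball_zero_iff, norm_neg, ← mem_ball_zero_iff]
  have hden : 1 - conj w * z ≠ 0 := by
    simpa [sub_eq_add_neg] using one_add_conj_mul_ne_zero hz hw'
  set u₀ := (z - w) / (1 - conj w * z)
  have hu₀ : u₀ ∈ ball (0 : ℂ) 1 := by
    convert mobius_mem_ball hz hw' using 1
    simp [u₀, sub_eq_add_neg]
  have hφu₀ : φ u₀ = z := by
    have hu₀eq : u₀ * (1 - conj w * z) = z - w := div_mul_cancel₀ _ hden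
    rw [div_eq_iff (one_add_conj_mul_ne_zero hu₀ hw)]
    linear_combination hu₀eq
  have hschwarz := Complex.dist_le_div_mul_dist_of_mapsTo_ball (R₂ := 1) (hg.comp hφd hφ)
    (by simpa [φ, hgw] using hmaps.comp hφ |>.mono_right ball_subset_closedBall) hu₀
  simp only [Function.comp_apply, hφu₀, φ, zero_add, mul_zero, add_zero, div_one, hgw,
    dist_zero_right, one_mul, u₀, norm_div] at hschwarz
  rwa [le_div_iff₀ (norm_pos_iff.2 hden)] at hschwarz

theorem schwarzPick_of_re_pos {P : ℂ → ℂ} (hP : DifferentiableOn ℂ P (ball 0 1))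
    (hpos : ∀ z ∈ ball (0 : ℂ) 1, 0 < (P z).re) {z w : ℂ} (hz : z ∈ ball (0 : ℂ) 1)
    (hw : w ∈ ball (0 : ℂ) 1) :
    (1 - normSq z) * (1 - normSq w) * normSq (P z + conj (P w)) ≤
      4 * (P z).re * (P w).re * normSq (1 - conj w * z) := by
  have hden : ∀ u ∈ ball (0 : ℂ) 1, P u + conj (P w) ≠ 0 := fun u hu h => by
    have := congrArg re h
    simp only [add_re, conj_re, zero_re] at this
    linarith [hpos u hu, hpos w hw]
  have hmaps : MapsTo (fun u => (P u - P w) / (P u + conj (P w))) (ball 0 1) (ball 0 1) := by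
    intro u hu
    rw [mem_ball_zero_iff, norm_div, div_lt_one (norm_pos_iff.2 (hden u hu))]
    apply norm_lt_norm_of_normSq_lt
    rw [normSq_sub_eq_normSq_add_conj_sub, sub_lt_self_iff]
    nlinarith [hpos u hu, hpos w hw]
  have h := schwarzPick_of_mapsTo_ball
    ((hP.sub_const _).fun_div (hP.add_const _) hden) hmaps hz hw (by simp)
  rw [norm_div, div_mul_eq_mul_div, div_le_iff₀ (norm_pos_iff.2 (hden z hz))] at h
  have hsq := pow_le_pow_left₀ (by positivity) h 2
  simp only [mul_pow, Complex.sq_norm] at hsq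
  have hzw := normSq_add_eq_normSq_one_add_conj_mul_sub z (-w)
  simp only [map_neg, neg_mul, ← sub_eq_add_neg, normSq_neg] at hzw
  rw [normSq_sub_eq_normSq_add_conj_sub, hzw] at hsq
  linear_combination hsq

theorem eqOn_of_re_nonneg_of_re_eq_zero {P : ℂ → ℂ} (hP : DifferentiableOn ℂ P (ball 0 1))
    (hre : ∀ z ∈ ball (0 : ℂ) 1, 0 ≤ (P z).re) {z₀ : ℂ} (hz₀ : z₀ ∈ ball (0 : ℂ) 1)
    (h₀ : (P z₀).re = 0) : ∀ z ∈ ball (0 : ℂ) 1, P z = P z₀ := by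
  rcases (hP.analyticOnNhd isOpen_ball).is_constant_or_isOpen (convex_ball 0 1).isPreconnected
    with ⟨c, hc⟩ | hopen
  · intro z hz
    rw [hc z hz, hc z₀ hz₀]
  · obtain ⟨ε, hε, hsub⟩ := Metric.mem_nhds_iff.1
      ((hopen _ subset_rfl isOpen_ball).mem_nhds (mem_image_of_mem P hz₀))
    obtain ⟨z, hz, hPz⟩ := hsub (show P z₀ - ε / 2 ∈ ball (P z₀) ε by
      simp [abs_of_pos hε, hε])
    have := hre z hz
    simp only [hPz, sub_re, h₀, div_ofNat_re, ofReal_re] at this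
    linarith

lemma forall_eq_zero_or_forall_ne_zero_of_re_nonneg {P : ℂ → ℂ}
    (hP : DifferentiableOn ℂ P (ball 0 1)) (hre : ∀ z ∈ ball (0 : ℂ) 1, 0 ≤ (P z).re) :
    (∀ z ∈ ball (0 : ℂ) 1, P z = 0) ∨ ∀ z ∈ ball (0 : ℂ) 1, P z ≠ 0 := by
  refine or_iff_not_imp_right.2 fun h => ?_
  obtain ⟨z₀, hz₀, h₀⟩ := not_forall₂.1 h
  rw [not_not] at h₀
  exact fun z hz => (eqOn_of_re_nonneg_of_re_eq_zero hP hre hz₀ (by simp [h₀]) z hz).trans h₀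

lemma re_inv_nonneg {z : ℂ} (h : 0 ≤ z.re) : 0 ≤ z⁻¹.re := by
  rw [inv_re]
  exact div_nonneg h (normSq_nonneg z)

theorem DifferentiableOn.inv_of_re_nonneg {P : ℂ → ℂ} (hP : DifferentiableOn ℂ P (ball 0 1))
    (hre : ∀ z ∈ ball (0 : ℂ) 1, 0 ≤ (P z).re) :
    DifferentiableOn ℂ (fun z => (P z)⁻¹) (ball 0 1) := by
  rcases forall_eq_zero_or_forall_ne_zero_of_re_nonneg hP hre with hzero | hne
  · exact (differentiableOn_const 0).congr fun z hz => by simp [hzero z hz]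
  · exact hP.inv hne

lemma re_herglotzRieszKernel (c w z : ℂ) :
    (herglotzRieszKernel c w z).re = poissonKernel c w z := by
  rw [poissonKernel_eq_re_herglotzRieszKernel]
  rfl

lemma poissonKernel_zero_of_norm_eq_one {ζ : ℂ} (hζ : ‖ζ‖ = 1) (z : ℂ) :
    poissonKernel 0 z ζ = (1 - normSq z) / normSq (ζ - z) := by
  simp [poissonKernel_def, hζ, normSq_eq_norm_sq]

lemma differentiableAt_herglotzRieszKernel {z ζ : ℂ} (h : z ≠ ζ) :
    DifferentiableAt ℂ (fun z => herglotzRieszKernel 0 z ζ) z := by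
  simp only [herglotzRieszKernel_def, sub_zero]
  exact (differentiableAt_const ζ).add differentiableAt_id |>.div
    ((differentiableAt_const ζ).sub differentiableAt_id) (sub_ne_zero.2 h.symm)

lemma ofReal_mul_mem_ball {ζ : ℂ} (hζ : ‖ζ‖ = 1) {ρ : ℝ} (hρ : ρ ∈ Set.Ioo 0 1) :
    (ρ : ℂ) * ζ ∈ ball (0 : ℂ) 1 := by
  rw [mem_ball_zero_iff, norm_mul, hζ, mul_one, norm_real, Real.norm_of_nonneg hρ.1.le]
  exact hρ.2

lemma tendsto_ofReal_mul_nhdsLT_one (ζ : ℂ) :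
    Tendsto (fun ρ : ℝ => (ρ : ℂ) * ζ) (𝓝[<] 1) (𝓝 ζ) :=
  ((by fun_prop : Continuous fun ρ : ℝ => (ρ : ℂ) * ζ).tendsto' 1 ζ (by simp)).mono_left
    nhdsWithin_le_nhds

lemma tendsto_one_sub_ofReal_nhdsLT_one :
    Tendsto (fun ρ : ℝ => 1 - (ρ : ℂ)) (𝓝[<] 1) (𝓝 0) :=
  ((by fun_prop : Continuous fun ρ : ℝ => 1 - (ρ : ℂ)).tendsto' 1 0 (by simp)).mono_left
    nhdsWithin_le_nhds

theorem re_pos_of_tendsto_radial {P : ℂ → ℂ} (hP : DifferentiableOn ℂ P (ball 0 1))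
    (hre : ∀ z ∈ ball (0 : ℂ) 1, 0 ≤ (P z).re) {ζ : ℂ} (hζ : ‖ζ‖ = 1) {σ : ℝ} (hσ : σ ≠ 0)
    (hres : Tendsto (fun ρ : ℝ => (1 - (ρ : ℂ)) * P (ρ * ζ)) (𝓝[<] 1) (𝓝 σ)) :
    ∀ z ∈ ball (0 : ℂ) 1, 0 < (P z).re := by
  intro z hz
  refine (hre z hz).lt_of_ne fun h => hσ ?_
  have hconst := eqOn_of_re_nonneg_of_re_eq_zero hP hre hz h.symm
  have hlim : Tendsto (fun ρ : ℝ => (1 - (ρ : ℂ)) * P (ρ * ζ)) (𝓝[<] 1) (𝓝 0) := by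
    refine (zero_mul (P z) ▸ tendsto_one_sub_ofReal_nhdsLT_one.mul_const (P z)).congr' ?_
    filter_upwards [Ioo_mem_nhdsLT one_pos] with ρ hρ
    rw [hconst _ (ofReal_mul_mem_ball hζ hρ)]
  exact_mod_cast tendsto_nhds_unique hres hlim

-- Schwarz–Pick at `w = ρ ζ`, multiplied by `1 - ρ` so that both sides converge as `ρ → 1`.
lemma schwarzPick_of_re_pos_radial {P : ℂ → ℂ} (hP : DifferentiableOn ℂ P (ball 0 1))
    (hpos : ∀ z ∈ ball (0 : ℂ) 1, 0 < (P z).re) {ζ : ℂ} (hζ : ‖ζ‖ = 1) {z : ℂ}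
    (hz : z ∈ ball (0 : ℂ) 1) {ρ : ℝ} (hρ : ρ ∈ Set.Ioo 0 1) :
    (1 - normSq z) * (1 + ρ) * normSq ((1 - (ρ : ℂ)) * P z + conj ((1 - (ρ : ℂ)) * P (ρ * ζ))) ≤
      4 * (P z).re * ((1 - (ρ : ℂ)) * P (ρ * ζ)).re * normSq (1 - ρ * conj ζ * z) := by
  have h := mul_le_mul_of_nonneg_left
    (schwarzPick_of_re_pos hP hpos hz (ofReal_mul_mem_ball hζ hρ)) (sub_pos.2 hρ.2).le
  have hρζ : normSq ((ρ : ℂ) * ζ) = ρ ^ 2 := by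
    rw [normSq_mul, normSq_ofReal, normSq_eq_norm_sq, hζ]
    ring
  have hcast : 1 - (ρ : ℂ) = ((1 - ρ : ℝ) : ℂ) := by push_cast; rfl
  have hsum : (1 - (ρ : ℂ)) * P z + conj ((1 - (ρ : ℂ)) * P (ρ * ζ)) =
      ((1 - ρ : ℝ) : ℂ) * (P z + conj (P (ρ * ζ))) := by
    rw [hcast, map_mul, conj_ofReal]
    ring
  rw [hsum, hcast, normSq_mul, normSq_ofReal, re_ofReal_mul]
  simp only [map_mul, conj_ofReal, hρζ] at h
  linear_combination h

theorem poissonKernel_le_re_of_tendsto_radial {P : ℂ → ℂ} (hP : DifferentiableOn ℂ P (ball 0 1))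
    (hre : ∀ z ∈ ball (0 : ℂ) 1, 0 ≤ (P z).re) {ζ : ℂ} (hζ : ‖ζ‖ = 1) {σ : ℝ} (hσ : 0 < σ)
    (hres : Tendsto (fun ρ : ℝ => (1 - (ρ : ℂ)) * P (ρ * ζ)) (𝓝[<] 1) (𝓝 σ))
    {z : ℂ} (hz : z ∈ ball (0 : ℂ) 1) : σ / 2 * poissonKernel 0 z ζ ≤ (P z).re := by
  have hpos := re_pos_of_tendsto_radial hP hre hζ hσ.ne' hres
  have hSP := eventually_of_mem (Ioo_mem_nhdsLT one_pos) fun ρ hρ =>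
    schwarzPick_of_re_pos_radial hP hpos hζ hz hρ
  have hρ : Tendsto (fun ρ : ℝ => ρ) (𝓝[<] 1) (𝓝 1) := tendsto_nhdsWithin_of_tendsto_nhds tendsto_id
  have hL := ((by fun_prop : Continuous fun q : ℝ × ℂ =>
      (1 - normSq z) * (1 + q.1) * normSq ((1 - (q.1 : ℂ)) * P z + conj q.2)).tendsto
      (1, (σ : ℂ))).comp (hρ.prodMk_nhds hres)
  have hR := ((by fun_prop : Continuous fun q : ℝ × ℂ =>
      4 * (P z).re * q.2.re * normSq (1 - q.1 * conj ζ * z)).tendsto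
      (1, (σ : ℂ))).comp (hρ.prodMk_nhds hres)
  have hlim := le_of_tendsto_of_tendsto hL hR hSP
  simp only [ofReal_one, sub_self, zero_mul, zero_add, conj_ofReal, normSq_ofReal, ofReal_re,
    one_mul, normSq_one_sub_conj_mul hζ] at hlim
  have hζz : 0 < normSq (ζ - z) :=
    normSq_pos.2 (sub_ne_zero.2 (ne_of_mem_ball_of_norm_eq_one hz hζ).symm)
  rw [poissonKernel_zero_of_norm_eq_one hζ,
    ← mul_le_mul_iff_of_pos_left (by positivity : 0 < 4 * σ)]
  field_simp
  nlinarith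

lemma tendsto_one_sub_mul_herglotzRieszKernel {ζ ζ' : ℂ} (h : ζ ≠ ζ') :
    Tendsto (fun ρ : ℝ => (1 - (ρ : ℂ)) * herglotzRieszKernel 0 (ρ * ζ) ζ') (𝓝[<] 1) (𝓝 0) := by
  simpa using tendsto_one_sub_ofReal_nhdsLT_one.mul
    ((differentiableAt_herglotzRieszKernel h).continuousAt.tendsto.comp
      (tendsto_ofReal_mul_nhdsLT_one ζ))

theorem sum_poissonKernel_le_re_of_tendsto_radial {ι : Type*} [Fintype ι] {P : ℂ → ℂ}
    (hP : DifferentiableOn ℂ P (ball 0 1)) (hre : ∀ z ∈ ball (0 : ℂ) 1, 0 ≤ (P z).re)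
    {ζ : ι → ℂ} (hζ : ∀ k, ‖ζ k‖ = 1) (hinj : Function.Injective ζ) {σ : ι → ℝ}
    (hσ : ∀ k, 0 < σ k)
    (hres : ∀ k, Tendsto (fun ρ : ℝ => (1 - (ρ : ℂ)) * P (ρ * ζ k)) (𝓝[<] 1) (𝓝 (σ k)))
    {z : ℂ} (hz : z ∈ ball (0 : ℂ) 1) :
    ∑ k, σ k / 2 * poissonKernel 0 z (ζ k) ≤ (P z).re := by
  classical
  have hre_term : ∀ k z, (((σ k / 2 : ℝ) : ℂ) * herglotzRieszKernel 0 z (ζ k)).re =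
      σ k / 2 * poissonKernel 0 z (ζ k) := fun k z => by
    rw [re_ofReal_mul, re_herglotzRieszKernel]
  suffices h : ∀ s : Finset ι, ∀ z ∈ ball (0 : ℂ) 1,
      0 ≤ (P z - ∑ k ∈ s, ((σ k / 2 : ℝ) : ℂ) * herglotzRieszKernel 0 z (ζ k)).re by
    have := h Finset.univ z hz
    rwa [sub_re, re_sum, Finset.sum_congr rfl fun k _ => hre_term k z, sub_nonneg] at this
  intro s
  induction s using Finset.induction_on with
  | empty => simpa using hre
  | insert a s ha ih =>
    set Ps := fun z => P z - ∑ k ∈ s, ((σ k / 2 : ℝ) : ℂ) * herglotzRieszKernel 0 z (ζ k)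
    have hPs : DifferentiableOn ℂ Ps (ball 0 1) :=
      hP.sub <| DifferentiableOn.fun_sum fun k _ z hz =>
        ((differentiableAt_herglotzRieszKernel (ne_of_mem_ball_of_norm_eq_one hz (hζ k))).const_mul
          _).differentiableWithinAt
    have hres_s : Tendsto (fun ρ : ℝ => (1 - (ρ : ℂ)) * Ps (ρ * ζ a)) (𝓝[<] 1) (𝓝 (σ a)) := by
      have hterm : ∀ k ∈ s, Tendsto (fun ρ : ℝ => (1 - (ρ : ℂ)) *
          (((σ k / 2 : ℝ) : ℂ) * herglotzRieszKernel 0 (ρ * ζ a) (ζ k))) (𝓝[<] 1) (𝓝 0) := by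
        intro k hk
        have hne : ζ a ≠ ζ k := fun h => ha (hinj h ▸ hk)
        simpa [mul_left_comm] using
          (tendsto_one_sub_mul_herglotzRieszKernel hne).const_mul ((σ k / 2 : ℝ) : ℂ)
      have htail := tendsto_finsetSum s hterm
      rw [sum_const_zero] at htail
      simpa [Ps, mul_sub, Finset.mul_sum] using (hres a).sub htail
    intro z hz
    have := poissonKernel_le_re_of_tendsto_radial hPs ih (hζ a) (hσ a) hres_s hz
    rw [sum_insert ha, add_comm, ← sub_sub, sub_re, hre_term a z]
    exact sub_nonneg.2 this

lemma stolzAngle_subset_ball (ζ : ℂ) (M : ℝ) : StolzAngle ζ M ⊆ ball (0 : ℂ) 1 :=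
  fun _ hz => mem_ball_zero_iff.2 hz.1

lemma nhdsWithin_stolzAngle_le {ζ : ℂ} (hζ : ‖ζ‖ = 1) (M : ℝ) :
    𝓝[StolzAngle ζ M] ζ ≤ 𝓝[≠] ζ :=
  nhdsWithin_mono ζ fun _ hz => ne_of_mem_ball_of_norm_eq_one (stolzAngle_subset_ball ζ M hz) hζ

lemma tendsto_ofReal_mul_nhdsWithin_stolzAngle {ζ : ℂ} (hζ : ‖ζ‖ = 1) {M : ℝ} (hM : 1 < M) :
    Tendsto (fun ρ : ℝ => (ρ : ℂ) * ζ) (𝓝[<] 1) (𝓝[StolzAngle ζ M] ζ) := by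
  refine tendsto_nhdsWithin_iff.2 ⟨tendsto_ofReal_mul_nhdsLT_one ζ, ?_⟩
  filter_upwards [Ioo_mem_nhdsLT one_pos] with ρ hρ
  refine ⟨mem_ball_zero_iff.1 (ofReal_mul_mem_ball hζ hρ), ?_⟩
  have : ζ - ρ * ζ = ((1 - ρ : ℝ) : ℂ) * ζ := by push_cast; ring
  rw [this, norm_mul, norm_mul, hζ, norm_real, norm_real, Real.norm_of_nonneg hρ.1.le,
    Real.norm_of_nonneg (sub_pos.2 hρ.2).le, mul_one, mul_one]
  exact lt_mul_left (sub_pos.2 hρ.2) hM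

lemma AngularLimit.tendsto_radial {g : ℂ → ℂ} {ζ L : ℂ} (h : AngularLimit g ζ L) (hζ : ‖ζ‖ = 1) :
    Tendsto (fun ρ : ℝ => g (ρ * ζ)) (𝓝[<] 1) (𝓝 L) :=
  (h 2 one_lt_two).comp (tendsto_ofReal_mul_nhdsWithin_stolzAngle hζ one_lt_two)

lemma tendsto_radial_of_angularLimit_sub_mul {P : ℂ → ℂ} {ζ : ℂ} (hζ : ‖ζ‖ = 1) {σ : ℝ}
    (h : AngularLimit (fun z => (z - ζ) * P z) ζ (-(σ * ζ))) :
    Tendsto (fun ρ : ℝ => (1 - (ρ : ℂ)) * P (ρ * ζ)) (𝓝[<] 1) (𝓝 σ) := by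
  have hζ0 : ζ ≠ 0 := norm_ne_zero_iff.1 (hζ ▸ one_ne_zero)
  convert (h.tendsto_radial hζ).div_const (-ζ) using 2 with ρ
  · field_simp
    ring
  · field_simp

lemma angularLimit_sub_mul_inv_of_angularLimit_div_sub {f p : ℂ → ℂ} (hf : ∀ z, f z = z * p z)
    {ζ : ℂ} (hζ : ζ ≠ 0) {m : ℝ} (hm : m < 0) (h : AngularLimit (fun z => f z / (z - ζ)) ζ m) :
    AngularLimit (fun z => (z - ζ) * (p z)⁻¹) ζ (-((1 / |m| : ℝ) * ζ)) := by
  intro M hM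
  have hid : Tendsto (fun z : ℂ => z) (𝓝[StolzAngle ζ M] ζ) (𝓝 ζ) :=
    tendsto_id.mono_left nhdsWithin_le_nhds
  have hlim : -((1 / |m| : ℝ) * ζ) = ζ / m := by
    rw [abs_of_neg hm]
    push_cast
    field_simp
  rw [hlim]
  refine (hid.div (h M hM) (ofReal_ne_zero.2 hm.ne)).congr' ?_
  filter_upwards [hid.eventually_ne hζ] with z hz
  rw [Pi.div_apply, hf, div_div_eq_mul_div, mul_div_mul_left _ _ hz, div_eq_mul_inv]

lemma angularLimitInfty_of_angularLimit_sub_mul {S : ℂ → ℂ} {ζ : ℂ} (hζ : ‖ζ‖ = 1)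
    (hS : ∀ z ∈ ball (0 : ℂ) 1, S z ≠ 0) (h : AngularLimit (fun z => (z - ζ) * S z) ζ 0) :
    AngularLimitInfty (fun z => z * (S z)⁻¹ / (z - ζ)) ζ := by
  intro M hM
  have hnorm : Tendsto (fun z : ℂ => ‖z‖) (𝓝[StolzAngle ζ M] ζ) (𝓝 1) :=
    hζ ▸ (continuous_norm.tendsto ζ).mono_left nhdsWithin_le_nhds
  have hinv : Tendsto (fun z => ‖((z - ζ) * S z)⁻¹‖) (𝓝[StolzAngle ζ M] ζ) atTop := by
    refine tendsto_norm_inv_nhdsNE_zero_atTop.comp (tendsto_nhdsWithin_iff.2 ⟨h M hM, ?_⟩)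
    filter_upwards [self_mem_nhdsWithin] with z hz
    have hz' := stolzAngle_subset_ball ζ M hz
    exact mul_ne_zero (sub_ne_zero.2 (ne_of_mem_ball_of_norm_eq_one hz' hζ)) (hS z hz')
  refine (hnorm.pos_mul_atTop one_pos hinv).congr fun z => ?_
  rw [← norm_mul, mul_inv]
  ring_nf

/-- `z` times the principal part `σ (c / z - 1 / (z - ζ))`; unlike the principal part itself, it
is holomorphic at `0`. -/
def poleTerm (σ : ℝ) (c ζ z : ℂ) : ℂ := σ * (c - z / (z - ζ))

lemma poleTerm_div {σ : ℝ} {c ζ z : ℂ} (hz : z ≠ 0) (hζ : z ≠ ζ) :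
    poleTerm σ c ζ z / z = σ * (c * (1 / z) - 1 / (z - ζ)) := by
  have := sub_ne_zero.2 hζ
  rw [poleTerm]
  field_simp

lemma differentiableAt_poleTerm {σ : ℝ} {c ζ z : ℂ} (h : z ≠ ζ) :
    DifferentiableAt ℂ (poleTerm σ c ζ) z :=
  (differentiableAt_const _).mul <| (differentiableAt_const c).sub <|
    differentiableAt_id.div (differentiableAt_id.sub_const ζ) (sub_ne_zero.2 h)

lemma re_poleTerm {σ : ℝ} {c ζ z : ℂ} (hc : c.re = 1 / 2) (h : z ≠ ζ) :
    (poleTerm σ c ζ z).re = σ / 2 * poissonKernel 0 z ζ := by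
  have hK : z / (z - ζ) = (1 - herglotzRieszKernel 0 z ζ) / 2 := by
    have := sub_ne_zero.2 h
    have := sub_ne_zero.2 h.symm
    simp only [herglotzRieszKernel_def, sub_zero]
    field_simp
    ring
  rw [poleTerm, hK, re_ofReal_mul, ← re_herglotzRieszKernel]
  simp only [sub_re, hc, one_div, div_ofNat_re, one_re]
  ring

lemma tendsto_sub_mul_poleTerm_self (σ : ℝ) (c ζ : ℂ) :
    Tendsto (fun z => (z - ζ) * poleTerm σ c ζ z) (𝓝[≠] ζ) (𝓝 (-(σ * ζ))) := by
  have : Tendsto (fun z => (σ : ℂ) * (c * (z - ζ) - z)) (𝓝[≠] ζ) (𝓝 (-(σ * ζ))) :=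
    ((by fun_prop : Continuous fun z => (σ : ℂ) * (c * (z - ζ) - z)).tendsto' ζ _
      (by simp)).mono_left nhdsWithin_le_nhds
  refine this.congr' ?_
  filter_upwards [self_mem_nhdsWithin] with z hz
  have := sub_ne_zero.2 hz
  rw [poleTerm]
  field_simp

lemma tendsto_sub_mul_poleTerm_of_ne {σ : ℝ} {c ζ ζ' : ℂ} (h : ζ ≠ ζ') :
    Tendsto (fun z => (z - ζ) * poleTerm σ c ζ' z) (𝓝 ζ) (𝓝 0) := by
  simpa using (tendsto_sub_nhds_zero_iff.2 tendsto_id).mul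
    (differentiableAt_poleTerm (σ := σ) (c := c) h).continuousAt.tendsto

-- `(w + 1) / (w - 1)` is a Herglotz kernel evaluated on the unit circle, hence imaginary.
lemma re_div_sub_one_of_norm_eq_one {w : ℂ} (hw : ‖w‖ = 1) (hw1 : w ≠ 1) :
    (w / (w - 1)).re = 1 / 2 := by
  have : w / (w - 1) = (1 + herglotzRieszKernel 0 1 w) / 2 := by
    have := sub_ne_zero.2 hw1
    simp only [herglotzRieszKernel_def, sub_zero]
    field_simp
    ring
  rw [this, div_ofNat_re, add_re, one_re, re_herglotzRieszKernel, poissonKernel_def]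
  simp [hw]

lemma conj_mul_ne_one_of_ne {ζ η : ℂ} (hζ : ‖ζ‖ = 1) (h : η ≠ ζ) : conj ζ * η ≠ 1 := by
  intro h1
  apply h
  calc η = ζ * conj ζ * η := by simp [mul_conj', hζ]
    _ = ζ := by rw [mul_assoc, h1, mul_one]

section Separation

variable {ι : Type*} [Fintype ι] {P : ℂ → ℂ} {ζ : ι → ℂ} {σ : ι → ℝ} {c : ι → ℂ}

theorem differentiableOn_sub_sum_poleTerm (hP : DifferentiableOn ℂ P (ball 0 1))
    (hζ : ∀ k, ‖ζ k‖ = 1) :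
    DifferentiableOn ℂ (fun z => P z - ∑ k, poleTerm (σ k) (c k) (ζ k) z) (ball 0 1) :=
  hP.sub <| DifferentiableOn.fun_sum fun k _ _ hz =>
    (differentiableAt_poleTerm (ne_of_mem_ball_of_norm_eq_one hz (hζ k))).differentiableWithinAt

theorem re_sub_sum_poleTerm_nonneg (hP : DifferentiableOn ℂ P (ball 0 1))
    (hre : ∀ z ∈ ball (0 : ℂ) 1, 0 ≤ (P z).re) (hζ : ∀ k, ‖ζ k‖ = 1)
    (hinj : Function.Injective ζ) (hσ : ∀ k, 0 < σ k) (hc : ∀ k, (c k).re = 1 / 2)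
    (hres : ∀ k, AngularLimit (fun z => (z - ζ k) * P z) (ζ k) (-(σ k * ζ k)))
    {z : ℂ} (hz : z ∈ ball (0 : ℂ) 1) :
    0 ≤ (P z - ∑ k, poleTerm (σ k) (c k) (ζ k) z).re := by
  rw [sub_re, re_sum, sub_nonneg,
    sum_congr rfl fun k _ => re_poleTerm (hc k) (ne_of_mem_ball_of_norm_eq_one hz (hζ k))]
  exact sum_poissonKernel_le_re_of_tendsto_radial hP hre hζ hinj hσ
    (fun k => tendsto_radial_of_angularLimit_sub_mul (hζ k) (hres k)) hz

theorem angularLimit_sub_mul_sub_sum_poleTerm (hζ : ∀ k, ‖ζ k‖ = 1)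
    (hinj : Function.Injective ζ)
    (hres : ∀ k, AngularLimit (fun z => (z - ζ k) * P z) (ζ k) (-(σ k * ζ k))) (n : ι) :
    AngularLimit (fun z => (z - ζ n) * (P z - ∑ k, poleTerm (σ k) (c k) (ζ k) z)) (ζ n) 0 := by
  classical
  intro M hM
  have hle := nhdsWithin_stolzAngle_le (hζ n) M
  have hterm : ∀ k ∈ Finset.univ, Tendsto (fun z => (z - ζ n) * poleTerm (σ k) (c k) (ζ k) z)
      (𝓝[StolzAngle (ζ n) M] ζ n) (𝓝 (if k = n then -(σ n * ζ n) else 0)) := by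
    intro k _
    split_ifs with hk
    · subst hk
      exact (tendsto_sub_mul_poleTerm_self _ _ _).mono_left hle
    · exact (tendsto_sub_mul_poleTerm_of_ne fun h => hk (hinj h).symm).mono_left
        (hle.trans nhdsWithin_le_nhds)
  simpa [mul_sub, mul_sum] using (hres n M hM).sub (tendsto_finsetSum _ hterm)

end Separation

lemma exists_eq_mul_of_re_nonneg {ι : Type*} {ζ : ι → ℂ} {R : ℂ → ℂ}
    (hR : DifferentiableOn ℂ R (ball 0 1)) (hre : ∀ z ∈ ball (0 : ℂ) 1, 0 ≤ (R z).re)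
    (hang : ∀ k, AngularLimit (fun z => (z - ζ k) * R z) (ζ k) 0) :
    ∃ (r : ℝ) (S : ℂ → ℂ), 0 ≤ r ∧ DifferentiableOn ℂ S (ball 0 1) ∧
      (∀ z ∈ ball (0 : ℂ) 1, 0 ≤ (S z).re) ∧ (∀ z ∈ ball (0 : ℂ) 1, S z ≠ 0) ∧
      (∀ k, AngularLimit (fun z => (z - ζ k) * S z) (ζ k) 0) ∧
      ∀ z ∈ ball (0 : ℂ) 1, R z = r * S z := by
  rcases forall_eq_zero_or_forall_ne_zero_of_re_nonneg hR hre with hzero | hne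
  · refine ⟨0, fun _ => 1, le_rfl, differentiableOn_const 1, by simp, by simp, fun k M _ => ?_,
      fun z hz => by simp [hzero z hz]⟩
    simpa using tendsto_sub_nhds_zero_iff.2 (tendsto_id.mono_left nhdsWithin_le_nhds)
  · exact ⟨1, R, zero_le_one, hR, hre, hne, hang, by simp⟩

lemma one_div_mul_eq_sum_add_div {ι : Type*} [Fintype ι] {σ : ι → ℝ} {c ζ : ι → ℂ} {r : ℝ}
    {z w s : ℂ} (hz : z ≠ 0) (hζ : ∀ k, z ≠ ζ k)
    (h : w⁻¹ - ∑ k, poleTerm (σ k) (c k) (ζ k) z = r * s) :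
    1 / (z * w) = ∑ k, (σ k : ℂ) * (c k * (1 / z) - 1 / (z - ζ k)) + r / (z * s⁻¹) := by
  calc 1 / (z * w) = (∑ k, poleTerm (σ k) (c k) (ζ k) z) / z + r * s / z := by
        rw [← h, one_div, mul_inv]
        ring
    _ = _ := by
      rw [sum_div, Finset.sum_congr rfl fun k _ => poleTerm_div hz (hζ k)]
      field_simp

/-- Corollary `c.dilation`: separation of boundary singularities
for a generator of dilation type (Denjoy–Wolff point 0). -/
theorem stmt7 (N : ℕ) (p f : ℂ → ℂ)
    (hp : DifferentiableOn ℂ p (ball (0:ℂ) 1))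
    (hre : ∀ z ∈ ball (0:ℂ) 1, 0 ≤ (p z).re)
    (hf : ∀ z, f z = z * p z)
    (ζ : Fin N → ℂ) (hinj : Function.Injective ζ)
    (hζ : ∀ n, ‖ζ n‖ = 1)
    (m : Fin N → ℝ) (hm : ∀ n, m n < 0)
    (hder : ∀ n, AngularLimit (fun z => f z / (z - ζ n)) (ζ n) ((m n : ℝ) : ℂ))
    (η : Fin N → ℂ) (hη : ∀ n, ‖η n‖ = 1)
    (hηζ : ∀ n, η n ≠ ζ n) :
    ∃ (r : ℝ) (q h : ℂ → ℂ), 0 ≤ r ∧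
      DifferentiableOn ℂ q (ball (0:ℂ) 1) ∧
      (∀ z ∈ ball (0:ℂ) 1, 0 ≤ (q z).re) ∧
      (∀ z, h z = z * q z) ∧
      (∀ n, AngularLimitInfty (fun z => h z / (z - ζ n)) (ζ n)) ∧
      ∀ z ∈ ball (0:ℂ) 1, f z ≠ 0 → h z ≠ 0 →
        1 / f z =
          (∑ n, (1 / ((|m n| : ℝ) : ℂ)) *
            (((starRingEnd ℂ) (ζ n) * η n / ((starRingEnd ℂ) (ζ n) * η n - 1)) * (1 / z)
              - 1 / (z - ζ n)))
            + (r : ℂ) / h z := by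
  set σ : Fin N → ℝ := fun n => 1 / |m n|
  set c : Fin N → ℂ := fun n => conj (ζ n) * η n / (conj (ζ n) * η n - 1)
  have hσ : ∀ n, 0 < σ n := fun n => one_div_pos.2 (abs_pos.2 (hm n).ne)
  have hc : ∀ n, (c n).re = 1 / 2 := fun n =>
    re_div_sub_one_of_norm_eq_one (by simp [hζ n, hη n]) (conj_mul_ne_one_of_ne (hζ n) (hηζ n))
  have hres : ∀ n, AngularLimit (fun z => (z - ζ n) * (p z)⁻¹) (ζ n) (-(σ n * ζ n)) := fun n =>
    angularLimit_sub_mul_inv_of_angularLimit_div_sub hf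
      (norm_ne_zero_iff.1 ((hζ n).symm ▸ one_ne_zero)) (hm n) (hder n)
  have hpinv := hp.inv_of_re_nonneg hre
  have hpinv_re : ∀ z ∈ ball (0 : ℂ) 1, 0 ≤ ((p z)⁻¹).re := fun z hz => re_inv_nonneg (hre z hz)
  obtain ⟨r, S, hr, hS, hSre, hSne, hSang, hRS⟩ := exists_eq_mul_of_re_nonneg
    (differentiableOn_sub_sum_poleTerm hpinv hζ)
    (fun z hz => re_sub_sum_poleTerm_nonneg hpinv hpinv_re hζ hinj hσ hc hres hz)
    (angularLimit_sub_mul_sub_sum_poleTerm hζ hinj hres)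
  refine ⟨r, fun z => (S z)⁻¹, fun z => z * (S z)⁻¹, hr, hS.inv hSne,
    fun z hz => re_inv_nonneg (hSre z hz), fun _ => rfl,
    fun n => angularLimitInfty_of_angularLimit_sub_mul (hζ n) hSne (hSang n), ?_⟩
  intro z hz hfz _
  have hz0 : z ≠ 0 := by rintro rfl; simp [hf] at hfz
  simpa only [hf, σ, c, ofReal_div, ofReal_one] using
    one_div_mul_eq_sum_add_div hz0 (fun n => ne_of_mem_ball_of_norm_eq_one hz (hζ n)) (hRS z hz)
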